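/- arXiv:math/0202235 — 2 statements merged into one kernel-verified Lean document; each statement's English description precedes it below -/
import Mathlib

section
/- Under the hypotheses of the previous variation-of-parameters formula (R analytic with |R(t)| ≤ K|t|^{-3-2Re ν} on the sector, Re ν > 0), the solution Δ(t) = (2ν+1)^{-1}[t ∫_∞^t R ds − t^{-2ν} ∫_∞^t s^{1+2ν} R ds] satisfies |Δ(t)| ≤ K' |t|^{-1-2Re ν} and |Δ'(t)| ≤ K' |t|^{-2-2Re ν} for a constant K' depending only on K, ν and the sector. -/
open Complex MeasureTheory Set Filter Topology Metric Pointwise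

/-!
Write `∫_∞^t f(s) ds = -∫_{σ ≥ 1} f(σ t) t dσ`. If `‖f z‖ ≤ C ‖z‖^(-p)` with `p > 1` on a
region stable under `t ↦ σ t` (`σ ≥ 1`), this ray integral is `O(‖t‖^(1-p))`, and it is a
primitive of `-f`: differentiating under the integral sign (dominated thanks to Cauchy estimates
on discs dilated along the ray) turns it into `∫_{σ ≥ 1} d/dσ [σ f(σ t)] dσ = -f t`. Apply this
to `R` (`p = 3 + 2 Re ν`) and to `s^(1+2ν) R(s)` (`p = 2`). In `Δ'` the two terms `± t R(t)`
cancel, since `t` and `t^(-2ν)` solve the homogeneous equation, and both bounds follow from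
`‖t^w‖ ≤ e^(π |Im w|) ‖t‖^(Re w)`.
-/

theorem Complex.norm_cpow_le_mul_exp (z w : ℂ) :
    ‖z ^ w‖ ≤ ‖z‖ ^ w.re * Real.exp (Real.pi * |w.im|) := by
  refine (norm_cpow_le z w).trans ?_
  rw [div_eq_mul_inv, ← Real.exp_neg]
  gcongr
  calc -(z.arg * w.im) ≤ |z.arg| * |w.im| := by rw [← abs_mul]; exact neg_le_abs _
    _ ≤ Real.pi * |w.im| := by gcongr; exact abs_arg_le_pi z

theorem integrableOn_Ici_one_rpow_neg {p : ℝ} (hp : 1 < p) :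
    IntegrableOn (fun σ : ℝ => σ ^ (-p)) (Ici 1) := by
  rw [integrableOn_Ici_iff_integrableOn_Ioi]
  exact integrableOn_Ioi_rpow_of_lt (by linarith) one_pos

theorem integral_Ici_one_rpow_neg {p : ℝ} (hp : 1 < p) :
    ∫ σ in Ici (1 : ℝ), σ ^ (-p) = (p - 1)⁻¹ := by
  rw [integral_Ici_eq_integral_Ioi, integral_Ioi_rpow_of_lt (by linarith) one_pos]
  rw [Real.one_rpow, div_eq_mul_inv, neg_one_mul, ← inv_neg, neg_add, neg_neg, add_comm]
  ring_nf

theorem norm_ofReal_mul {σ : ℝ} (hσ : 0 ≤ σ) (t : ℂ) : ‖(σ : ℂ) * t‖ = σ * ‖t‖ := by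
  rw [norm_mul, norm_real, Real.norm_of_nonneg hσ]

theorem Complex.norm_cpow_mul_le {g : ℂ → ℂ} {z w : ℂ} {C p : ℝ} (hz : z ≠ 0)
    (h : ‖g z‖ ≤ C * ‖z‖ ^ (-p)) :
    ‖z ^ w * g z‖ ≤ C * Real.exp (Real.pi * |w.im|) * ‖z‖ ^ (w.re - p) := by
  rw [norm_mul, sub_eq_add_neg, Real.rpow_add (norm_pos_iff.mpr hz)]
  calc ‖z ^ w‖ * ‖g z‖ ≤ ‖z‖ ^ w.re * Real.exp (Real.pi * |w.im|) * (C * ‖z‖ ^ (-p)) :=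
        mul_le_mul (norm_cpow_le_mul_exp z w) h (norm_nonneg _) (by positivity)
    _ = _ := by ring

theorem isOpen_sector {ρ A B : ℝ}
    (h : {t : ℂ | ρ < ‖t‖ ∧ A < t.arg ∧ t.arg < B} ⊆ slitPlane) :
    IsOpen {t : ℂ | ρ < ‖t‖ ∧ A < t.arg ∧ t.arg < B} := by
  refine isOpen_iff_mem_nhds.mpr fun t ht => ?_
  have harg : ContinuousAt arg t := continuousAt_arg (h ht)
  filter_upwards [continuous_norm.continuousAt.eventually (eventually_gt_nhds ht.1),
    harg.eventually (eventually_gt_nhds ht.2.1), harg.eventually (eventually_lt_nhds ht.2.2)]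
    with s h₁ h₂ h₃
  exact ⟨h₁, h₂, h₃⟩

/-- `rayIntegral f t = ∫ f` along the ray from `t` to `∞`, parametrised by `s = σ t`, `σ ≥ 1`;
the paper's `∫_∞^t f(s) ds` is `-rayIntegral f t`. -/
noncomputable def rayIntegral (f : ℂ → ℂ) (t : ℂ) : ℂ :=
  ∫ σ in Ici (1 : ℝ), f (σ * t) * t

def IsStableUnderDilation (S : Set ℂ) : Prop :=
  ∀ t ∈ S, ∀ σ : ℝ, 1 ≤ σ → (σ : ℂ) * t ∈ S

section Ray

variable {S : Set ℂ} {f : ℂ → ℂ} {C p : ℝ} {t : ℂ}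

theorem norm_comp_ofReal_mul_le (hray : IsStableUnderDilation S)
    (hfb : ∀ z ∈ S, ‖f z‖ ≤ C * ‖z‖ ^ (-p)) (ht : t ∈ S) {σ : ℝ} (hσ : 1 ≤ σ) :
    ‖f (σ * t)‖ ≤ C * ‖t‖ ^ (-p) * σ ^ (-p) := by
  have h := hfb _ (hray t ht σ hσ)
  rwa [norm_ofReal_mul (by linarith), Real.mul_rpow (by linarith) (norm_nonneg t),
    mul_comm (σ ^ _), ← mul_assoc] at h

theorem norm_rayIntegrand_le (hray : IsStableUnderDilation S)
    (hp : 1 < p) (hfb : ∀ z ∈ S, ‖f z‖ ≤ C * ‖z‖ ^ (-p)) (ht : t ∈ S) {σ : ℝ} (hσ : 1 ≤ σ) :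
    ‖f (σ * t) * t‖ ≤ C * ‖t‖ ^ (1 - p) * σ ^ (-p) := by
  rw [norm_mul, ← neg_add_eq_sub, Real.rpow_add_one' (norm_nonneg t) (by linarith)]
  calc ‖f (σ * t)‖ * ‖t‖ ≤ C * ‖t‖ ^ (-p) * σ ^ (-p) * ‖t‖ := by
        gcongr; exact norm_comp_ofReal_mul_le hray hfb ht hσ
    _ = _ := by ring

theorem norm_rayIntegral_le (hray : IsStableUnderDilation S)
    (hp : 1 < p) (hfb : ∀ z ∈ S, ‖f z‖ ≤ C * ‖z‖ ^ (-p)) (ht : t ∈ S) :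
    ‖rayIntegral f t‖ ≤ C / (p - 1) * ‖t‖ ^ (1 - p) := by
  calc ‖rayIntegral f t‖ ≤ ∫ σ in Ici (1 : ℝ), C * ‖t‖ ^ (1 - p) * σ ^ (-p) := by
        refine norm_integral_le_of_norm_le
          ((integrableOn_Ici_one_rpow_neg hp).const_mul _) ?_
        filter_upwards [ae_restrict_mem measurableSet_Ici] with σ hσ
        exact norm_rayIntegrand_le hray hp hfb ht hσ
    _ = C / (p - 1) * ‖t‖ ^ (1 - p) := by
        rw [integral_const_mul, integral_Ici_one_rpow_neg hp]; ring

theorem tendsto_ofReal_mul_comp_ofReal_mul (hray : IsStableUnderDilation S)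
    (hp : 1 < p) (hfb : ∀ z ∈ S, ‖f z‖ ≤ C * ‖z‖ ^ (-p)) (ht : t ∈ S) :
    Tendsto (fun σ : ℝ => (σ : ℂ) * f (σ * t)) atTop (𝓝 0) := by
  have hdecay : Tendsto (fun σ : ℝ => C * ‖t‖ ^ (-p) * σ ^ (-(p - 1))) atTop (𝓝 0) := by
    simpa using (tendsto_rpow_neg_atTop (by linarith : 0 < p - 1)).const_mul (C * ‖t‖ ^ (-p))
  refine squeeze_zero_norm' ?_ hdecay
  filter_upwards [eventually_ge_atTop 1] with σ hσ
  have hσ0 : 0 < σ := by linarith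
  rw [norm_mul, norm_real, Real.norm_of_nonneg hσ0.le, neg_sub, sub_eq_neg_add,
    Real.rpow_add_one hσ0.ne']
  calc σ * ‖f (σ * t)‖ ≤ σ * (C * ‖t‖ ^ (-p) * σ ^ (-p)) := by
        gcongr; exact norm_comp_ofReal_mul_le hray hfb ht hσ
    _ = _ := by ring

theorem hasDerivAt_comp_ofReal_mul_mul {σ : ℝ} {u : ℂ} (hf : DifferentiableAt ℂ f (σ * u)) :
    HasDerivAt (fun v => f (σ * v) * v) (deriv f (σ * u) * σ * u + f (σ * u)) u := by
  have hlin : HasDerivAt (fun v : ℂ => (σ : ℂ) * v) σ u := by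
    simpa using (hasDerivAt_id u).const_mul (σ : ℂ)
  have hcomp : HasDerivAt (fun v => f (σ * v)) (deriv f (σ * u) * σ) u :=
    hf.hasDerivAt.comp u hlin
  exact (hcomp.mul (hasDerivAt_id' u)).congr_deriv (by ring)

theorem hasDerivAt_ofReal_mul_comp_ofReal_mul {σ : ℝ} (hf : DifferentiableAt ℂ f (σ * t)) :
    HasDerivAt (fun σ : ℝ => (σ : ℂ) * f (σ * t)) (deriv f (σ * t) * σ * t + f (σ * t)) σ := by
  have hlin : HasDerivAt (fun z : ℂ => z * t) t σ := by
    simpa using (hasDerivAt_id (σ : ℂ)).mul_const t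
  have hcomp : HasDerivAt (fun z => f (z * t)) (deriv f (σ * t) * t) σ :=
    hf.hasDerivAt.comp (σ : ℂ) hlin
  exact ((hasDerivAt_id' (σ : ℂ)).mul hcomp).comp_ofReal.congr_deriv (by ring)

theorem integral_deriv_ofReal_mul_comp_ofReal_mul
    (hray : IsStableUnderDilation S) (hS : IsOpen S)
    (hf : DifferentiableOn ℂ f S) (hp : 1 < p) (hfb : ∀ z ∈ S, ‖f z‖ ≤ C * ‖z‖ ^ (-p))
    (ht : t ∈ S)
    (hint : IntegrableOn (fun σ : ℝ => deriv f (σ * t) * σ * t + f (σ * t)) (Ici 1)) :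
    ∫ σ in Ici (1 : ℝ), (deriv f (σ * t) * σ * t + f (σ * t)) = -f t := by
  rw [integral_Ici_eq_integral_Ioi, integral_Ioi_of_hasDerivAt_of_tendsto'
    (fun σ hσ => hasDerivAt_ofReal_mul_comp_ofReal_mul
      (hf.differentiableAt (hS.mem_nhds (hray t ht σ hσ))))
    (hint.mono_set Ioi_subset_Ici_self) (tendsto_ofReal_mul_comp_ofReal_mul hray hp hfb ht)]
  simp

theorem mem_and_norm_le_on_dilated_closedBall
    (hray : IsStableUnderDilation S) (hp : 0 ≤ p)
    (hfb : ∀ z ∈ S, ‖f z‖ ≤ C * ‖z‖ ^ (-p)) {u : ℂ} {s m : ℝ} (hs : 0 ≤ s) (hm : 0 < m)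
    (hball : closedBall u s ⊆ S) (hnorm : ∀ w ∈ closedBall u s, m ≤ ‖w‖) {σ : ℝ} (hσ : 1 ≤ σ) :
    ∀ z ∈ closedBall ((σ : ℂ) * u) (σ * s), z ∈ S ∧ ‖f z‖ ≤ C * m ^ (-p) * σ ^ (-p) := by
  have hσ0 : 0 < σ := by linarith
  have hu : u ∈ closedBall u s := mem_closedBall_self hs
  have hC : 0 ≤ C := nonneg_of_mul_nonneg_left ((norm_nonneg _).trans (hfb u (hball hu)))
    (Real.rpow_pos_of_pos (hm.trans_le (hnorm u hu)) _)
  have hdil : closedBall ((σ : ℂ) * u) (σ * s) = (σ : ℂ) • closedBall u s := by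
    rw [smul_closedBall _ _ hs, norm_real, Real.norm_of_nonneg hσ0.le, smul_eq_mul]
  rintro z hz
  obtain ⟨w, hw, rfl⟩ := hdil ▸ hz
  have hwS : (σ : ℂ) • w ∈ S := hray w (hball hw) σ hσ
  refine ⟨hwS, (hfb _ hwS).trans ?_⟩
  rw [smul_eq_mul, norm_ofReal_mul hσ0.le, mul_assoc, ← Real.mul_rpow hm.le hσ0.le, mul_comm m]
  exact mul_le_mul_of_nonneg_left (Real.rpow_le_rpow_of_nonpos (by positivity)
    (by gcongr; exact hnorm w hw) (by linarith)) hC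

theorem norm_deriv_comp_ofReal_mul_le (hray : IsStableUnderDilation S)
    (hf : DifferentiableOn ℂ f S) (hp : 0 ≤ p) (hfb : ∀ z ∈ S, ‖f z‖ ≤ C * ‖z‖ ^ (-p))
    {u : ℂ} {s m : ℝ} (hs : 0 < s) (hm : 0 < m) (hball : closedBall u s ⊆ S)
    (hnorm : ∀ w ∈ closedBall u s, m ≤ ‖w‖) {σ : ℝ} (hσ : 1 ≤ σ) :
    ‖deriv f (σ * u)‖ ≤ C * m ^ (-p) / s * σ ^ (-p - 1) := by
  have hσ0 : 0 < σ := by linarith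
  have hdil := mem_and_norm_le_on_dilated_closedBall hray hp hfb hs.le hm hball hnorm hσ
  have hd : DiffContOnCl ℂ f (ball ((σ : ℂ) * u) (σ * s)) := by
    refine (hf.mono ?_).diffContOnCl
    rw [closure_ball ((σ : ℂ) * u) (by positivity : σ * s ≠ 0)]
    exact fun z hz => (hdil z hz).1
  calc ‖deriv f (σ * u)‖ ≤ C * m ^ (-p) * σ ^ (-p) / (σ * s) :=
        norm_deriv_le_of_forall_mem_sphere_norm_le (by positivity) hd
          fun z hz => (hdil z (sphere_subset_closedBall hz)).2
    _ = C * m ^ (-p) / s * σ ^ (-p - 1) := by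
        rw [Real.rpow_sub_one hσ0.ne']
        field_simp

theorem norm_deriv_rayIntegrand_le (hray : IsStableUnderDilation S)
    (hf : DifferentiableOn ℂ f S) (hp : 0 ≤ p) (hfb : ∀ z ∈ S, ‖f z‖ ≤ C * ‖z‖ ^ (-p))
    {u : ℂ} {s m P : ℝ} (hs : 0 < s) (hm : 0 < m) (hball : closedBall u s ⊆ S)
    (hnorm : ∀ w ∈ closedBall u s, m ≤ ‖w‖) (hu : ‖u‖ ≤ P) {σ : ℝ} (hσ : 1 ≤ σ) :
    ‖deriv f (σ * u) * σ * u + f (σ * u)‖ ≤ C * m ^ (-p) * (P / s + 1) * σ ^ (-p) := by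
  have hσ0 : 0 < σ := by linarith
  have hderiv := norm_deriv_comp_ofReal_mul_le hray hf hp hfb hs hm hball hnorm hσ
  have hval := (mem_and_norm_le_on_dilated_closedBall hray hp hfb hs.le hm hball hnorm hσ
    _ (mem_closedBall_self (by positivity))).2
  calc ‖deriv f (σ * u) * σ * u + f (σ * u)‖
      ≤ C * m ^ (-p) / s * σ ^ (-p - 1) * σ * P + C * m ^ (-p) * σ ^ (-p) := by
        refine (norm_add_le _ _).trans (add_le_add ?_ hval)
        rw [norm_mul, norm_mul, norm_real, Real.norm_of_nonneg hσ0.le]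
        exact mul_le_mul (mul_le_mul_of_nonneg_right hderiv hσ0.le) hu (norm_nonneg _)
          (mul_nonneg ((norm_nonneg _).trans hderiv) hσ0.le)
    _ = C * m ^ (-p) * (P / s + 1) * σ ^ (-p) := by
        rw [Real.rpow_sub_one hσ0.ne']
        field_simp

theorem continuousOn_comp_ofReal_mul (hray : IsStableUnderDilation S)
    {g : ℂ → ℂ} (hg : ContinuousOn g S) (ht : t ∈ S) :
    ContinuousOn (fun σ : ℝ => g (σ * t)) (Ici 1) :=
  hg.comp (by fun_prop) fun σ hσ => hray t ht σ hσ

theorem hasDerivAt_rayIntegral (hS : IsOpen S)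
    (hray : IsStableUnderDilation S) (hf : DifferentiableOn ℂ f S)
    (hp : 1 < p) (hfb : ∀ z ∈ S, ‖f z‖ ≤ C * ‖z‖ ^ (-p)) (ht : t ∈ S) (ht0 : t ≠ 0) :
    HasDerivAt (rayIntegral f) (-f t) t := by
  obtain ⟨r, hr, hrt, hball⟩ : ∃ r, 0 < r ∧ r < ‖t‖ ∧ closedBall t r ⊆ S := by
    obtain ⟨ε, hε, hεS⟩ := Metric.isOpen_iff.mp hS t ht
    refine ⟨min (ε / 2) (‖t‖ / 2), by positivity, by simp [norm_pos_iff.mpr ht0], ?_⟩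
    exact (closedBall_subset_ball (by simp [hε])).trans hεS
  have hcont := hf.continuousOn
  have hcont' : ContinuousOn (deriv f) S := (hf.analyticOnNhd hS).deriv.continuousOn
  have hmeas : ∀ v ∈ S, AEStronglyMeasurable (fun σ : ℝ => f (σ * v) * v)
      (volume.restrict (Ici 1)) := fun v hv =>
    ((continuousOn_comp_ofReal_mul hray hcont hv).mul continuousOn_const).aestronglyMeasurable
      measurableSet_Ici
  have hint : IntegrableOn (fun σ : ℝ => f (σ * t) * t) (Ici 1) :=
    ((integrableOn_Ici_one_rpow_neg hp).const_mul (C * ‖t‖ ^ (1 - p))).mono' (hmeas t ht)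
      ((ae_restrict_mem measurableSet_Ici).mono fun σ hσ => norm_rayIntegrand_le hray hp hfb ht hσ)
  have hbound : ∀ u ∈ ball t (r / 2), ∀ σ : ℝ, 1 ≤ σ →
      ‖deriv f (σ * u) * σ * u + f (σ * u)‖ ≤
        C * (‖t‖ - r) ^ (-p) * ((‖t‖ + r) / (r / 2) + 1) * σ ^ (-p) := by
    intro u hu σ hσ
    have hsub : closedBall u (r / 2) ⊆ closedBall t r := closedBall_subset_closedBall'
      (by linarith [mem_ball.mp hu])
    refine norm_deriv_rayIntegrand_le hray hf (by linarith) hfb (by positivity) (by linarith)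
      (hsub.trans hball) (fun w hw => ?_) ?_ hσ
    · have := norm_sub_norm_le t w
      linarith [mem_closedBall'.mp (hsub hw), dist_eq_norm t w]
    · have := norm_sub_norm_le u t
      linarith [mem_ball.mp hu, dist_eq_norm u t]
  obtain ⟨hint', hderiv⟩ := hasDerivAt_integral_of_dominated_loc_of_deriv_le
    (F' := fun v (σ : ℝ) => deriv f (σ * v) * σ * v + f (σ * v))
    (ball_mem_nhds t (half_pos hr)) (eventually_of_mem (hS.mem_nhds ht) hmeas)
    hint
    ((((continuousOn_comp_ofReal_mul hray hcont' ht).mul (by fun_prop)).mul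
      continuousOn_const).add (continuousOn_comp_ofReal_mul hray hcont ht) |>.aestronglyMeasurable
      measurableSet_Ici)
    ((ae_restrict_mem measurableSet_Ici).mono fun σ hσ u hu => hbound u hu σ hσ)
    ((integrableOn_Ici_one_rpow_neg hp).const_mul _)
    ((ae_restrict_mem measurableSet_Ici).mono fun σ hσ u hu =>
      hasDerivAt_comp_ofReal_mul_mul (hf.differentiableAt (hS.mem_nhds (hray u
        (hball (ball_subset_closedBall (ball_subset_ball (by linarith) hu))) σ hσ))))
  rwa [integral_deriv_ofReal_mul_comp_ofReal_mul hray hS hf hp hfb ht hint'] at hderiv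

end Ray

/-- The paper's `Δ`, with `I₁ t = -∫_∞^t R` and `I₂ t = -∫_∞^t s^(1+2ν) R(s) ds`. -/
noncomputable def variationOfParameters (ν : ℂ) (I₁ I₂ : ℂ → ℂ) (t : ℂ) : ℂ :=
  (2 * ν + 1)⁻¹ * (t * -I₁ t - t ^ (-2 * ν) * -I₂ t)

section VariationOfParameters

variable {ν t : ℂ} {I₁ I₂ : ℂ → ℂ}

theorem hasDerivAt_variationOfParameters {g : ℂ → ℂ} (ht : t ∈ slitPlane)
    (h₁ : HasDerivAt I₁ (-g t) t) (h₂ : HasDerivAt I₂ (-(t ^ (1 + 2 * ν) * g t)) t) :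
    HasDerivAt (variationOfParameters ν I₁ I₂)
      ((2 * ν + 1)⁻¹ * (-I₁ t - 2 * ν * t ^ (-2 * ν - 1) * I₂ t)) t := by
  have hpow : t ^ (-2 * ν) * t ^ (1 + 2 * ν) = t := by
    rw [← cpow_add _ _ (slitPlane_ne_zero ht), show -2 * ν + (1 + 2 * ν) = 1 by ring, cpow_one]
  have h := (((hasDerivAt_id' t).mul h₁.neg).sub
    (((hasDerivAt_id' t).cpow_const (c := -2 * ν) ht).mul h₂.neg)).const_mul (2 * ν + 1)⁻¹
  refine h.congr_deriv ?_
  simp only [Pi.neg_apply]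
  linear_combination (-((2 * ν + 1)⁻¹ * g t)) * hpow

theorem norm_variationOfParameters_le {a b : ℝ} (ht : t ≠ 0)
    (h₁ : ‖I₁ t‖ ≤ a * ‖t‖ ^ (-2 - 2 * ν.re)) (h₂ : ‖I₂ t‖ ≤ b * ‖t‖ ^ (-1 : ℝ)) :
    ‖variationOfParameters ν I₁ I₂ t‖ ≤
      ‖(2 * ν + 1)⁻¹‖ * (a + Real.exp (Real.pi * (2 * |ν.im|)) * b) * ‖t‖ ^ (-1 - 2 * ν.re) := by
  have htp : 0 < ‖t‖ := norm_pos_iff.mpr ht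
  have hpow : ‖t ^ (-2 * ν)‖ ≤ ‖t‖ ^ (-2 * ν.re) * Real.exp (Real.pi * (2 * |ν.im|)) := by
    simpa [abs_mul] using norm_cpow_le_mul_exp t (-2 * ν)
  unfold variationOfParameters
  calc _ ≤ ‖(2 * ν + 1)⁻¹‖ * (‖t‖ * ‖I₁ t‖ + ‖t ^ (-2 * ν)‖ * ‖I₂ t‖) := by
        rw [norm_mul]; gcongr
        refine (norm_sub_le _ _).trans_eq ?_
        rw [norm_mul, norm_mul, norm_neg, norm_neg]
    _ ≤ ‖(2 * ν + 1)⁻¹‖ * (‖t‖ * (a * ‖t‖ ^ (-2 - 2 * ν.re)) +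
          ‖t‖ ^ (-2 * ν.re) * Real.exp (Real.pi * (2 * |ν.im|)) * (b * ‖t‖ ^ (-1 : ℝ))) := by
        gcongr
    _ = _ := by
        have e₁ : ‖t‖ ^ (-1 - 2 * ν.re) = ‖t‖ ^ (1 : ℝ) * ‖t‖ ^ (-2 - 2 * ν.re) := by
          rw [← Real.rpow_add htp]; ring_nf
        have e₂ : ‖t‖ ^ (-1 - 2 * ν.re) = ‖t‖ ^ (-2 * ν.re) * ‖t‖ ^ (-1 : ℝ) := by
          rw [← Real.rpow_add htp]; ring_nf
        rw [Real.rpow_one] at e₁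
        linear_combination (-‖(2 * ν + 1)⁻¹‖ * a) * e₁ -
          (‖(2 * ν + 1)⁻¹‖ * Real.exp (Real.pi * (2 * |ν.im|)) * b) * e₂

theorem norm_deriv_variationOfParameters_le {a b : ℝ} (ht : t ≠ 0)
    (h₁ : ‖I₁ t‖ ≤ a * ‖t‖ ^ (-2 - 2 * ν.re)) (h₂ : ‖I₂ t‖ ≤ b * ‖t‖ ^ (-1 : ℝ)) :
    ‖(2 * ν + 1)⁻¹ * (-I₁ t - 2 * ν * t ^ (-2 * ν - 1) * I₂ t)‖ ≤
      ‖(2 * ν + 1)⁻¹‖ * (a + 2 * ‖ν‖ * Real.exp (Real.pi * (2 * |ν.im|)) * b) *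
        ‖t‖ ^ (-2 - 2 * ν.re) := by
  have htp : 0 < ‖t‖ := norm_pos_iff.mpr ht
  have hpow : ‖t ^ (-2 * ν - 1)‖ ≤
      ‖t‖ ^ (-2 * ν.re - 1) * Real.exp (Real.pi * (2 * |ν.im|)) := by
    simpa [abs_mul] using norm_cpow_le_mul_exp t (-2 * ν - 1)
  calc _ ≤ ‖(2 * ν + 1)⁻¹‖ * (‖I₁ t‖ + 2 * ‖ν‖ * ‖t ^ (-2 * ν - 1)‖ * ‖I₂ t‖) := by
        rw [norm_mul]; gcongr
        refine (norm_sub_le _ _).trans_eq ?_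
        rw [norm_mul, norm_mul, norm_mul, norm_neg, Complex.norm_two]
    _ ≤ ‖(2 * ν + 1)⁻¹‖ * (a * ‖t‖ ^ (-2 - 2 * ν.re) + 2 * ‖ν‖ *
          (‖t‖ ^ (-2 * ν.re - 1) * Real.exp (Real.pi * (2 * |ν.im|))) * (b * ‖t‖ ^ (-1 : ℝ))) := by
        gcongr
    _ = _ := by
        have e : ‖t‖ ^ (-2 - 2 * ν.re) = ‖t‖ ^ (-2 * ν.re - 1) * ‖t‖ ^ (-1 : ℝ) := by
          rw [← Real.rpow_add htp]; ring_nf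
        rw [e]; ring

end VariationOfParameters

theorem variation_of_parameters_bounds_general (ρ A B : ℝ) (ν : ℂ) (hν : 0 < ν.re) (K : ℝ)
    (S : Set ℂ) (hS : S = {t : ℂ | ρ < ‖t‖ ∧ A < t.arg ∧ t.arg < B})
    (hslit : S ⊆ Complex.slitPlane)
    (hray : ∀ t ∈ S, ∀ σ : ℝ, 1 ≤ σ → (σ : ℂ) * t ∈ S)
    (R : ℂ → ℂ) (hRa : DifferentiableOn ℂ R S)
    (hRb : ∀ t ∈ S, ‖R t‖ ≤ K * ‖t‖ ^ (-3 - 2 * ν.re))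
    (Δ : ℂ → ℂ)
    (hΔ : ∀ t ∈ S, Δ t = (2 * ν + 1)⁻¹ *
      (t * (-(∫ σ in Set.Ici (1 : ℝ), R ((σ : ℂ) * t) * t))
        - t ^ (-2 * ν) *
          (-(∫ σ in Set.Ici (1 : ℝ), ((σ : ℂ) * t) ^ (1 + 2 * ν) * R ((σ : ℂ) * t) * t)))) :
    ∃ K' : ℝ, 0 < K' ∧ ∀ t ∈ S,
      ‖Δ t‖ ≤ K' * ‖t‖ ^ (-1 - 2 * ν.re) ∧
      ‖deriv Δ t‖ ≤ K' * ‖t‖ ^ (-2 - 2 * ν.re) := by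
  have hSo : IsOpen S := hS ▸ isOpen_sector (hS ▸ hslit)
  have ht0 : ∀ t ∈ S, t ≠ 0 := fun t ht => slitPlane_ne_zero (hslit ht)
  set E := Real.exp (Real.pi * (2 * |ν.im|))
  set G : ℂ → ℂ := fun z => z ^ (1 + 2 * ν) * R z
  have hp : 1 < 3 + 2 * ν.re := by linarith
  have hR : ∀ z ∈ S, ‖R z‖ ≤ K * ‖z‖ ^ (-(3 + 2 * ν.re)) := by simpa only [neg_add'] using hRb
  have hG : ∀ z ∈ S, ‖G z‖ ≤ K * E * ‖z‖ ^ (-2 : ℝ) := fun z hz => by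
    convert norm_cpow_mul_le (w := 1 + 2 * ν) (ht0 z hz) (hR z hz) using 3 <;> norm_num [E, abs_mul]
  have hGd : DifferentiableOn ℂ G S := fun z hz =>
    ((differentiableAt_id.cpow_const (hslit hz)).mul
      (hRa.differentiableAt (hSo.mem_nhds hz))).differentiableWithinAt
  have h₁ : ∀ t ∈ S, ‖rayIntegral R t‖ ≤ K / (2 + 2 * ν.re) * ‖t‖ ^ (-2 - 2 * ν.re) :=
    fun t ht => by convert norm_rayIntegral_le hray hp hR ht using 3 <;> ring
  have h₂ : ∀ t ∈ S, ‖rayIntegral G t‖ ≤ K * E * ‖t‖ ^ (-1 : ℝ) :=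
    fun t ht => by convert norm_rayIntegral_le hray one_lt_two hG ht using 2 <;> norm_num
  have hΔ' : ∀ t ∈ S, Δ =ᶠ[𝓝 t] variationOfParameters ν (rayIntegral R) (rayIntegral G) :=
    fun t ht => eventually_of_mem (hSo.mem_nhds ht) hΔ
  set M₁ := ‖(2 * ν + 1)⁻¹‖ * (K / (2 + 2 * ν.re) + E * (K * E))
  set M₂ := ‖(2 * ν + 1)⁻¹‖ * (K / (2 + 2 * ν.re) + 2 * ‖ν‖ * E * (K * E))
  refine ⟨max (max M₁ M₂) 1, lt_max_of_lt_right one_pos, fun t ht => ⟨?_, ?_⟩⟩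
  · rw [(hΔ' t ht).eq_of_nhds]
    refine (norm_variationOfParameters_le (ht0 t ht) (h₁ t ht) (h₂ t ht)).trans ?_
    exact mul_le_mul_of_nonneg_right (le_max_of_le_left (le_max_left _ _)) (by positivity)
  · rw [(hΔ' t ht).deriv_eq, (hasDerivAt_variationOfParameters (hslit ht)
      (hasDerivAt_rayIntegral hSo hray hRa hp hR ht (ht0 t ht))
      (hasDerivAt_rayIntegral hSo hray hGd one_lt_two hG ht (ht0 t ht))).deriv]
    refine (norm_deriv_variationOfParameters_le (ht0 t ht) (h₁ t ht) (h₂ t ht)).trans ?_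
    exact mul_le_mul_of_nonneg_right (le_max_of_le_left (le_max_right _ _)) (by positivity)

/-- Under the hypotheses of the variation-of-parameters formula
(`R` analytic with `|R(t)| ≤ K |t|^{-3-2Re ν}` on the sector, `Re ν > 0`),
the solution `Δ(t) = (2ν+1)⁻¹ [t ∫_∞^t R ds − t^{-2ν} ∫_∞^t s^{1+2ν} R ds]`
satisfies `|Δ(t)| ≤ K' |t|^{-1-2Re ν}` and `|Δ'(t)| ≤ K' |t|^{-2-2Re ν}`. -/
theorem variation_of_parameters_bounds (ρ A B : ℝ) (ν : ℂ) (hν : 0 < ν.re)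
    (hν1 : 2 * ν + 1 ≠ 0) (K : ℝ)
    (S : Set ℂ) (hS : S = {t : ℂ | ρ < ‖t‖ ∧ A < t.arg ∧ t.arg < B})
    (hslit : S ⊆ Complex.slitPlane)
    (hray : ∀ t ∈ S, ∀ σ : ℝ, 1 ≤ σ → (σ : ℂ) * t ∈ S)
    (R : ℂ → ℂ) (hRa : DifferentiableOn ℂ R S)
    (hRb : ∀ t ∈ S, ‖R t‖ ≤ K * ‖t‖ ^ (-3 - 2 * ν.re))
    (Δ : ℂ → ℂ)
    (hΔ : ∀ t ∈ S, Δ t = (2 * ν + 1)⁻¹ *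
      (t * (-(∫ σ in Set.Ici (1 : ℝ), R ((σ : ℂ) * t) * t))
        - t ^ (-2 * ν) *
          (-(∫ σ in Set.Ici (1 : ℝ), ((σ : ℂ) * t) ^ (1 + 2 * ν) * R ((σ : ℂ) * t) * t)))) :
    ∃ K' : ℝ, 0 < K' ∧ ∀ t ∈ S,
      ‖Δ t‖ ≤ K' * ‖t‖ ^ (-1 - 2 * ν.re) ∧
      ‖deriv Δ t‖ ≤ K' * ‖t‖ ^ (-2 - 2 * ν.re) :=
  variation_of_parameters_bounds_general ρ A B ν hν K S hS hslit hray R hRa hRb Δ hΔ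
end

section
/- Suppose T₀, T₁, T₂ : D → ℂ with |T₀ T₂ / T₁²| ≤ 1/8 on D, T₁ ≠ 0. Then τ := 4 (T₀/T₁)² (T₂/T₁) (1 + √(1 − 4T₀T₂/T₁²))^{-2} satisfies |τ| ≤ 4 |T₀|² |T₂| / |T₁|³, and moreover (−T₁ + √(T₁² − 4T₀T₂))/(2T₂) = −T₀/T₁ − τ. -/
open Complex

/-!
The principal square root `w = (1 - z) ^ (1/2)` always has nonnegative real part, so
`‖1 + w‖ ≥ Re (1 + w) ≥ 1`; this gives the bound on `τ` for every `z`. The identity is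
`w - 1 = (w² - 1) / (1 + w) = -z / (1 + w)` together with `1 + (1 - w) / (1 + w) = 2 / (1 + w)`.
-/

lemma Complex.one_le_norm_one_add_cpow_inv_two (z : ℂ) : 1 ≤ ‖1 + z ^ (2⁻¹ : ℂ)‖ := by
  have hre : 0 ≤ (z ^ (2⁻¹ : ℂ)).re := by
    rw [cpow_inv_two_re]
    exact Real.sqrt_nonneg _
  calc (1 : ℝ) ≤ (1 + z ^ (2⁻¹ : ℂ)).re := by simp only [add_re, one_re]; linarith
    _ ≤ ‖1 + z ^ (2⁻¹ : ℂ)‖ := re_le_norm _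

lemma norm_mul_inv_sq_le {x u : ℂ} (hu : 1 ≤ ‖u‖) : ‖x * u⁻¹ ^ 2‖ ≤ ‖x‖ := by
  rw [norm_mul, norm_pow, norm_inv]
  exact mul_le_of_le_one_right (norm_nonneg x) (pow_le_one₀ (by positivity) (inv_le_one_of_one_le₀ hu))

lemma quadratic_root_eq_sub_correction {a b c w : ℂ} (hb : b ≠ 0) (hc : c ≠ 0)
    (hw : w ^ 2 = 1 - 4 * a * c / b ^ 2) (hw1 : 1 + w ≠ 0) :
    (-b + b * w) / (2 * c) = -(a / b) - 4 * (a / b) ^ 2 * (c / b) * (1 + w)⁻¹ ^ 2 := by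
  have hdisc : b ^ 2 * w ^ 2 = b ^ 2 - 4 * a * c := by
    rw [hw]
    field_simp
  field_simp
  linear_combination (b ^ 2 * (1 + w) + 2 * a * c) * hdisc

lemma quadratic_correction_bound_and_identity {a b c : ℂ} (hb : b ≠ 0) (hc : c ≠ 0) :
    ‖4 * (a / b) ^ 2 * (c / b) * (1 + (1 - 4 * a * c / b ^ 2) ^ ((1 : ℂ) / 2))⁻¹ ^ 2‖
        ≤ 4 * ‖a‖ ^ 2 * ‖c‖ / ‖b‖ ^ 3 ∧
      (-b + b * (1 - 4 * a * c / b ^ 2) ^ ((1 : ℂ) / 2)) / (2 * c)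
        = -(a / b) - 4 * (a / b) ^ 2 * (c / b) *
            (1 + (1 - 4 * a * c / b ^ 2) ^ ((1 : ℂ) / 2))⁻¹ ^ 2 := by
  rw [one_div]
  have hw := one_le_norm_one_add_cpow_inv_two (1 - 4 * a * c / b ^ 2)
  refine ⟨?_, quadratic_root_eq_sub_correction hb hc (cpow_nat_inv_pow _ two_ne_zero) ?_⟩
  · refine (norm_mul_inv_sq_le hw).trans_eq ?_
    simp only [norm_mul, norm_pow, norm_div, Complex.norm_ofNat]
    field_simp
  · exact norm_pos_iff.mp (one_pos.trans_le hw)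

theorem tau_bound_and_identity_general (D : Set ℂ) (T₀ T₁ T₂ : ℂ → ℂ)
    (h1 : ∀ t ∈ D, T₁ t ≠ 0) (h2 : ∀ t ∈ D, T₂ t ≠ 0) :
    ∀ t ∈ D,
      ‖4 * (T₀ t / T₁ t) ^ 2 * (T₂ t / T₁ t) *
          (1 + (1 - 4 * T₀ t * T₂ t / (T₁ t) ^ 2) ^ ((1 : ℂ) / 2))⁻¹ ^ 2‖
        ≤ 4 * (‖T₀ t‖) ^ 2 * ‖T₂ t‖ / (‖T₁ t‖) ^ 3 ∧
      (-T₁ t + T₁ t * (1 - 4 * T₀ t * T₂ t / (T₁ t) ^ 2) ^ ((1 : ℂ) / 2)) / (2 * T₂ t)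
        = -(T₀ t / T₁ t)
          - 4 * (T₀ t / T₁ t) ^ 2 * (T₂ t / T₁ t) *
            (1 + (1 - 4 * T₀ t * T₂ t / (T₁ t) ^ 2) ^ ((1 : ℂ) / 2))⁻¹ ^ 2 :=
  fun t ht => quadratic_correction_bound_and_identity (h1 t ht) (h2 t ht)

/-- If `|T₀T₂/T₁²| ≤ 1/8` and `T₁, T₂ ≠ 0` on `D`, then
`τ := 4(T₀/T₁)²(T₂/T₁)(1 + √(1 − 4T₀T₂/T₁²))⁻²` satisfies
`|τ| ≤ 4|T₀|²|T₂|/|T₁|³`, and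
`(−T₁ + √(T₁² − 4T₀T₂))/(2T₂) = −T₀/T₁ − τ`, where
`√(T₁² − 4T₀T₂)` is chosen as `T₁√(1 − 4T₀T₂/T₁²)` (principal branch). -/
theorem tau_bound_and_identity (D : Set ℂ) (T₀ T₁ T₂ : ℂ → ℂ)
    (h1 : ∀ t ∈ D, T₁ t ≠ 0) (h2 : ∀ t ∈ D, T₂ t ≠ 0)
    (h3 : ∀ t ∈ D, ‖T₀ t * T₂ t / (T₁ t) ^ 2‖ ≤ 1 / 8) :
    ∀ t ∈ D,
      ‖4 * (T₀ t / T₁ t) ^ 2 * (T₂ t / T₁ t) *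
          (1 + (1 - 4 * T₀ t * T₂ t / (T₁ t) ^ 2) ^ ((1 : ℂ) / 2))⁻¹ ^ 2‖
        ≤ 4 * (‖T₀ t‖) ^ 2 * ‖T₂ t‖ / (‖T₁ t‖) ^ 3 ∧
      (-T₁ t + T₁ t * (1 - 4 * T₀ t * T₂ t / (T₁ t) ^ 2) ^ ((1 : ℂ) / 2)) / (2 * T₂ t)
        = -(T₀ t / T₁ t)
          - 4 * (T₀ t / T₁ t) ^ 2 * (T₂ t / T₁ t) *
            (1 + (1 - 4 * T₀ t * T₂ t / (T₁ t) ^ 2) ^ ((1 : ℂ) / 2))⁻¹ ^ 2 :=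
  tau_bound_and_identity_general D T₀ T₁ T₂ h1 h2
end
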